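/- Let T: ℤ × ℤ → ℝ satisfy the time evolution T(n, t+2) = 2T(n, t+1) - T(n, t) + X^{(g)}_{n+1, t} for all n, t, where X^{(g)}_{n,t} is as above and the quasi-periodicity T(n+g+1,t) = T(n,t) + an + bt + c with 2b - a < (g+1)L holds. Then T satisfies the tropical bilinear equation T(n, t-1) + T(n, t+1) = min[2T(n, t), T(n-1, t+1) + T(n+1, t-1) + L] for all n, t. -/

import Mathlib

/-! Peeling off the `j = 0` term of the minimum gives the recursion
`X^{(k+1)}_{n+1,t} = min(0, D_{n,t} + X^{(k)}_{n,t})`, where `D_{n,t}` is the defect of the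
bilinear equation. Quasi-periodicity makes the `j = g + 1` term of `X^{(g+1)}` equal to
`(g+1)L + a - 2b > 0`, so `X^{(g+1)} = X^{(g)}` and the recursion closes on `X^{(g)}`.
Substituting it into the evolution at `n` and `n - 1` turns the evolution into the bilinear
equation. -/

/-- The tropical permanent-type expression `X^{(k)}_{n,t}`. -/
noncomputable def Xfun (L : ℝ) (T : ℤ → ℤ → ℝ) (k : ℕ) (n t : ℤ) : ℝ :=
  (Finset.range (k + 1)).inf' Finset.nonempty_range_add_one fun j =>
    (j : ℝ) * L + 2 * T (n - j - 1) (t + 1) + T n t + T (n - 1) t -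
      (2 * T (n - 1) (t + 1) + T (n - j) t + T (n - j - 1) t)

namespace Finset

theorem inf'_range_succ {α : Type*} [LinearOrder α] (k : ℕ) (f : ℕ → α) :
    (range (k + 2)).inf' nonempty_range_add_one f =
      min ((range (k + 1)).inf' nonempty_range_add_one f) (f (k + 1)) := by
  rw [inf'_congr _ range_add_one fun _ _ => rfl, inf'_insert nonempty_range_add_one, min_comm]

theorem inf'_range_succ' {α : Type*} [LinearOrder α] (k : ℕ) (f : ℕ → α) :
    (range (k + 2)).inf' nonempty_range_add_one f =
      min (f 0) ((range (k + 1)).inf' nonempty_range_add_one fun j => f (j + 1)) := by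
  rw [inf'_congr _ (range_add_one' _) fun _ _ => rfl, inf'_insert (by simp), inf'_map]
  rfl

end Finset

open Finset

theorem Xfun_succ_add_one (L : ℝ) (T : ℤ → ℤ → ℝ) (k : ℕ) (n t : ℤ) :
    Xfun L T (k + 1) (n + 1) t =
      min 0 (L + 2 * T (n - 1) (t + 1) + T (n + 1) t - 2 * T n (t + 1) - T (n - 1) t
        + Xfun L T k n t) := by
  rw [Xfun, inf'_range_succ', Xfun,
    apply_inf'_eq_inf'_comp _ _ fun x y => (min_add_add_left _ x y).symm]
  congr 1
  · simp
  · refine inf'_congr _ rfl fun j _ => ?_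
    simp only [Function.comp_apply]
    push_cast
    ring_nf

theorem Xfun_succ_eq_self {g : ℕ} {L a b c : ℝ} {T : ℤ → ℤ → ℝ}
    (hquasi : ∀ n t : ℤ, T (n + g + 1) t = T n t + (a * n + b * t + c))
    (hL : 2 * b - a < (g + 1) * L) (n t : ℤ) :
    Xfun L T (g + 1) n t = Xfun L T g n t := by
  rw [Xfun, inf'_range_succ, ← Xfun, min_eq_left]
  calc Xfun L T g n t ≤ 0 := by
        refine (inf'_le _ (mem_range.mpr g.succ_pos)).trans_eq ?_
        simp
    _ ≤ _ := by
        have h1 := hquasi (n - g - 1) t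
        have h2 := hquasi (n - g - 2) t
        have h3 := hquasi (n - g - 2) (t + 1)
        push_cast at hL h1 h2 h3 ⊢
        ring_nf at h1 h2 h3 ⊢
        linarith

theorem evolution_implies_bilinear_general (g : ℕ) (L a b c : ℝ)
    (T : ℤ → ℤ → ℝ)
    (hquasi : ∀ n t : ℤ, T (n + g + 1) t = T n t + (a * n + b * t + c))
    (hL : 2 * b - a < (g + 1) * L)
    (hev : ∀ n t : ℤ, T n (t + 2) = 2 * T n (t + 1) - T n t + Xfun L T g (n + 1) t) :
    ∀ n t : ℤ, T n (t - 1) + T n (t + 1) =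
      min (2 * T n t) (T (n - 1) (t + 1) + T (n + 1) (t - 1) + L) := by
  intro n t
  obtain ⟨u, rfl⟩ : ∃ u : ℤ, t = u + 1 := ⟨t - 1, by ring⟩
  set D := L + 2 * T (n - 1) (u + 1) + T (n + 1) u - 2 * T n (u + 1) - T (n - 1) u
  have hX : Xfun L T g (n + 1) u = min 0 (D + Xfun L T g n u) :=
    (Xfun_succ_eq_self hquasi hL _ _).symm.trans (Xfun_succ_add_one L T g n u)
  have hprev := hev (n - 1) u
  rw [sub_add_cancel] at hprev
  rw [add_sub_cancel_right, add_assoc u 1 1, one_add_one_eq_two]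
  calc T n u + T n (u + 2) = 2 * T n (u + 1) + min 0 (D + Xfun L T g n u) := by
        rw [hev, hX]; ring
    _ = min (2 * T n (u + 1)) (T (n - 1) (u + 2) + T (n + 1) u + L) := by
        rw [hprev, ← min_add_add_left, add_zero]; congr 1; ring

theorem evolution_implies_bilinear (g : ℕ) (hg : 0 < g) (L a b c : ℝ)
    (T : ℤ → ℤ → ℝ)
    (hquasi : ∀ n t : ℤ, T (n + g + 1) t = T n t + (a * n + b * t + c))
    (hL : 2 * b - a < (g + 1) * L)
    (hev : ∀ n t : ℤ, T n (t + 2) = 2 * T n (t + 1) - T n t + Xfun L T g (n + 1) t) :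
    ∀ n t : ℤ, T n (t - 1) + T n (t + 1) =
      min (2 * T n t) (T (n - 1) (t + 1) + T (n + 1) (t - 1) + L) :=
  evolution_implies_bilinear_general g L a b c T hquasi hL hev
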